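/- Let Σ be a finite alphabet and L ⊆ Σ*. Then L is the language of some deterministic upward-compatible well-structured transition system if and only if the Nerode quasi order ⪯_L on Σ* is a WQO. -/

import Mathlib

/-- A labeled transition system whose states carry a compatible quasi order
(an upward-compatible LTS, ULTS): the final states are upward closed and the
quasi order is a simulation relation. -/
structure ULTS (A : Type) : Type 1 where
  S : Type
  le : S → S → Prop
  le_refl : ∀ s, le s s
  le_trans : ∀ ⦃s t u⦄, le s t → le t u → le s u
  init : Set S
  tr : S → A → Set S
  final : Set S
  final_up : ∀ ⦃s t⦄, s ∈ final → le s t → t ∈ final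
  sim : ∀ ⦃s t⦄ (a : A) ⦃s'⦄, le s t → s' ∈ tr s a → ∃ t', t' ∈ tr t a ∧ le s' t'

namespace ULTS

variable {A : Type}

/-- One-step successors of a set of states. -/
def stepSet (U : ULTS A) (P : Set U.S) (a : A) : Set U.S := ⋃ s ∈ P, U.tr s a

/-- States reachable from `P` by reading a word. -/
def reachSet (U : ULTS A) (P : Set U.S) : List A → Set U.S
  | [] => P
  | a :: w => U.reachSet (U.stepSet P a) w

/-- The language of a ULTS: words that can reach a final state from an initial state. -/
def lang (U : ULTS A) : Set (List A) := {w | (U.reachSet U.init w ∩ U.final).Nonempty}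

/-- The quasi order of the ULTS is a well quasi order; a ULTS with this property
is a (upward-compatible) WSTS. -/
def IsWQO (U : ULTS A) : Prop := ∀ f : ℕ → U.S, ∃ i j, i < j ∧ U.le (f i) (f j)

/-- A ULTS is deterministic if the set of initial states and every transition image
are singletons. -/
def Deterministic (U : ULTS A) : Prop :=
  (∃ s, U.init = {s}) ∧ ∀ s a, ∃ t, U.tr s a = {t}

end ULTS

/-- A language is regular if it is accepted by a deterministic finite automaton
with finitely many states. -/
def IsRegularLang {A : Type} (L : Set (List A)) : Prop :=
  ∃ (Q : Type) (_ : Fintype Q) (M : DFA A Q), M.accepts = L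

/-- Two languages are regularly separable if some regular language contains the
first and is disjoint from the second. -/
def RegSep {A : Type} (L1 L2 : Set (List A)) : Prop :=
  ∃ R : Set (List A), IsRegularLang R ∧ L1 ⊆ R ∧ R ∩ L2 = ∅


/-- A relation is a well quasi order if every infinite sequence has an
increasing pair `i < j` with `r (f i) (f j)`. -/
def IsWQORel {S : Type*} (r : S → S → Prop) : Prop :=
  ∀ f : ℕ → S, ∃ i j, i < j ∧ r (f i) (f j)

/-- The Nerode quasi order of a language: `u ⪯_L v` iff every extension of `u`
in `L` is also an extension of `v` in `L`. -/
def NerodeLe {A : Type} (L : Set (List A)) (u v : List A) : Prop :=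
  ∀ w : List A, u ++ w ∈ L → v ++ w ∈ L

/-!
Upward compatibility makes the simulation order propagate along any word, so if the state
reached on `u` is below the state reached on `v` then `u ⪯_L v`. In a deterministic WSTS each
word reaches a single state, and the WQO on states pulls back to the Nerode order.
Conversely, the words themselves, ordered by `⪯_L` and with `a`-steps `u ↦ u ++ [a]`, form
a deterministic ULTS accepting `L`; it is a WSTS exactly when `⪯_L` is a WQO.
-/

lemma IsWQORel.of_map {α β : Type*} {r : α → α → Prop} {s : β → β → Prop} (g : β → α)
    (hr : IsWQORel r) (hg : ∀ x y, r (g x) (g y) → s x y) : IsWQORel s := fun f =>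
  let ⟨i, j, hij, h⟩ := hr (g ∘ f)
  ⟨i, j, hij, hg _ _ h⟩

namespace ULTS

variable {A : Type} (U : ULTS A)

lemma reachSet_append (P : Set U.S) (u w : List A) :
    U.reachSet P (u ++ w) = U.reachSet (U.reachSet P u) w := by
  induction u generalizing P with
  | nil => rfl
  | cons a u ih => exact ih _

lemma exists_le_of_mem_reachSet {P Q : Set U.S} (hPQ : ∀ p ∈ P, ∃ q ∈ Q, U.le p q)
    (w : List A) {s : U.S} (hs : s ∈ U.reachSet P w) : ∃ t ∈ U.reachSet Q w, U.le s t := by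
  induction w generalizing P Q with
  | nil => exact hPQ s hs
  | cons a w ih =>
    refine ih (fun p' hp' => ?_) hs
    obtain ⟨p, hp, hp'⟩ := Set.mem_iUnion₂.mp hp'
    obtain ⟨q, hq, hpq⟩ := hPQ p hp
    obtain ⟨q', hq', hpq'⟩ := U.sim a hpq hp'
    exact ⟨q', Set.mem_iUnion₂.mpr ⟨q, hq, hq'⟩, hpq'⟩

lemma nerodeLe_lang {u v : List A}
    (h : ∀ s ∈ U.reachSet U.init u, ∃ t ∈ U.reachSet U.init v, U.le s t) :
    NerodeLe U.lang u v := by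
  rintro w ⟨s, hs, hsF⟩
  rw [lang, Set.mem_ofPred_eq, reachSet_append] at *
  obtain ⟨t, ht, hst⟩ := U.exists_le_of_mem_reachSet h w hs
  exact ⟨t, ht, U.final_up hsF hst⟩

lemma Deterministic.exists_reachSet_eq_singleton (hU : U.Deterministic) (w : List A) :
    ∃ t, U.reachSet U.init w = {t} := by
  obtain ⟨s, hs⟩ := hU.1
  rw [hs]
  clear hs
  induction w generalizing s with
  | nil => exact ⟨s, rfl⟩
  | cons a w ih =>
    obtain ⟨t, ht⟩ := hU.2 s a
    have hstep : U.stepSet {s} a = {t} := by simp [stepSet, ht]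
    simpa only [reachSet, hstep] using ih t

abbrev nerode (L : Set (List A)) : ULTS A where
  S := List A
  le := NerodeLe L
  le_refl _ _ h := h
  le_trans _ _ _ huv hvw w h := hvw w (huv w h)
  init := {[]}
  tr u a := {u ++ [a]}
  final := L
  final_up u v hu huv := by simpa using huv [] (by simpa using hu)
  sim u v a u' huv hu' := by
    refine ⟨v ++ [a], rfl, fun w hw => ?_⟩
    rw [Set.mem_singleton_iff.mp hu'] at hw
    simpa using huv (a :: w) (by simpa using hw)

variable (L : Set (List A))

lemma nerode_deterministic : (nerode L).Deterministic :=
  ⟨⟨[], rfl⟩, fun u a => ⟨u ++ [a], rfl⟩⟩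

lemma nerode_reachSet (u w : List A) : (nerode L).reachSet {u} w = {u ++ w} := by
  induction w generalizing u with
  | nil => simp [reachSet]
  | cons a w ih =>
    have hstep : (nerode L).stepSet {u} a = {u ++ [a]} := by simp [stepSet]
    simp [reachSet, hstep, ih]

lemma nerode_lang : (nerode L).lang = L := by
  ext w
  show ((nerode L).reachSet {[]} w ∩ L).Nonempty ↔ w ∈ L
  rw [nerode_reachSet, List.nil_append, Set.singleton_inter_nonempty]

end ULTS

theorem det_wsts_lang_iff_nerode_wqo_general {A : Type} (L : Set (List A)) :
    (∃ U : ULTS A, U.IsWQO ∧ U.Deterministic ∧ U.lang = L) ↔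
      IsWQORel (NerodeLe L) := by
  constructor
  · rintro ⟨U, hwqo, hdet, rfl⟩
    choose σ hσ using hdet.exists_reachSet_eq_singleton
    refine IsWQORel.of_map σ hwqo fun u v h => U.nerodeLe_lang ?_
    simpa only [hσ, Set.mem_singleton_iff, forall_eq, exists_eq_left] using h
  · exact fun hwqo => ⟨ULTS.nerode L, hwqo, ULTS.nerode_deterministic L, ULTS.nerode_lang L⟩

/-- A language over a finite alphabet is accepted by a
deterministic upward-compatible WSTS iff its Nerode quasi order is a WQO. -/
theorem det_wsts_lang_iff_nerode_wqo {A : Type} [Finite A] (L : Set (List A)) :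
    (∃ U : ULTS A, U.IsWQO ∧ U.Deterministic ∧ U.lang = L) ↔
      IsWQORel (NerodeLe L) :=
  det_wsts_lang_iff_nerode_wqo_general L
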